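/- Let (X,Φ) be the natural feature construction with Y = {0,1}. For each n ∈ ℕ let T_n = (f_n, ψ_n) where ψ_n(x,x') = f_n if f_n(x) = 1 and f_n(x') = 0, ψ_n(x,x') = ¬f_n if f_n(x) = 0 and f_n(x') = 1, and ψ_n(x,x') = ⊥ otherwise. Let 𝒯 = {T_n : n ∈ ℕ} and H = {(0̄,0),(1̄,1)}. Then DFFdim(𝒯,H) = 1, while Ldim(DtO(𝒯,H)) = ∞; moreover, there exists an infinite-depth Littlestone tree for DtO(𝒯,H) (every root-to-leaf path of every finite truncation is consistent with some hypothesis in the class, and the tree extends to infinite depth). -/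

import Mathlib

open scoped Classical

/-- A teacher over examples `X`, labels `Y` and Boolean features `Φ`:
a labeling function together with a feature-feedback function that, whenever
two examples receive different labels, returns a feature of `Φ` satisfied by
the first example and not by the second. -/
structure Teacher (X Y : Type) (Φ : Set (X → Bool)) where
  label : X → Y
  feedback : X → X → Option (X → Bool)
  feedback_spec : ∀ x xh : X, label x ≠ label xh →
    ∃ φ ∈ Φ, feedback x xh = some φ ∧ φ x = true ∧ φ xh = false

/-- A teacher is consistent with a history `H` of labeled examples. -/
def ConsistentH {X Y : Type} {Φ : Set (X → Bool)} (T : Teacher X Y Φ)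
    (H : Set (X × Y)) : Prop :=
  ∀ p ∈ H, T.label p.1 = p.2

/-- Restriction of a teacher class by one round of DFF interaction: the
teachers that label `x` with `y` and give feature feedback `φ` on `(x, xh)`. -/
def TRestrict {X Y : Type} {Φ : Set (X → Bool)} (𝒯 : Set (Teacher X Y Φ))
    (x xh : X) (y : Y) (φ : X → Bool) : Set (Teacher X Y Φ) :=
  {T | T ∈ 𝒯 ∧ T.label x = y ∧ T.feedback x xh = some φ}

/-- `ShatteredDFFT Φ 𝒯 H d` holds iff there is a DFF tree of height `d`
shattered by the teacher class `𝒯` and the history `H`: at a leaf, some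
teacher of the current class is consistent with the accumulated history
(i.e. every root-to-leaf path of the tree is consistent with some teacher of
the original class that is consistent with the original history); at an inner
node a next example `x` is presented, and for every available explanation
pair `(xh, yh)` (an element of the history or a labeled example revealed
along the path, all of which are accumulated in `H`) there is teacher
feedback `(y, φ)` with `y ≠ yh` and `φ ∈ Φ` leading to a shattered subtree of
height `d` for the correspondingly restricted class and extended history. -/
inductive ShatteredDFFT {X Y : Type} (Φ : Set (X → Bool)) :
    Set (Teacher X Y Φ) → Set (X × Y) → ℕ → Prop
  | leaf (𝒯 : Set (Teacher X Y Φ)) (H : Set (X × Y))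
      (h : ∃ T ∈ 𝒯, ConsistentH T H) : ShatteredDFFT Φ 𝒯 H 0
  | node (𝒯 : Set (Teacher X Y Φ)) (H : Set (X × Y)) (d : ℕ) (x : X)
      (y : X × Y → Y) (φ : X × Y → (X → Bool))
      (hne : ∀ p ∈ H, y p ≠ p.2) (hΦ : ∀ p ∈ H, φ p ∈ Φ)
      (h : ∀ p ∈ H,
        ShatteredDFFT Φ (TRestrict 𝒯 x p.1 (y p) (φ p)) (insert (x, y p) H) d) :
      ShatteredDFFT Φ 𝒯 H (d + 1)

/-- The DFF dimension of a teacher class `𝒯` with history `H`: the maximal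
height of a DFF tree shattered by `𝒯` and `H` (possibly infinite). -/
noncomputable def DFFdim {X Y : Type} (Φ : Set (X → Bool))
    (𝒯 : Set (Teacher X Y Φ)) (H : Set (X × Y)) : ℕ∞ :=
  sSup {d : ℕ∞ | ∃ n : ℕ, d = n ∧ ShatteredDFFT Φ 𝒯 H n}

/-- The indicator feature of a single element. -/
noncomputable def indF {Z : Type} (w : Z) : Z → Bool :=
  fun z => decide (z = w)

/-- The feature set of the mapping `OtD`: all singleton indicator features on
`X ⊕ Y` (the example domain `X` enlarged by a fresh example `⋆_y = inr y`
for every label `y`). -/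
noncomputable def OtDPhi (X Y : Type) : Set ((X ⊕ Y) → Bool) :=
  {φ | ∃ w : X ⊕ Y, φ = indF w}

/-- The history of the mapping `OtD`: each fresh example `⋆_y` labeled `y`. -/
def OtDHist (X Y : Type) : Set ((X ⊕ Y) × Y) :=
  {p | ∃ y : Y, p = (Sum.inr y, y)}

/-- The teacher class of the mapping `OtD` applied to a hypothesis class `F`:
for `f ∈ F`, the teacher labels by the extension of `f` sending `⋆_y` to `y`,
and its feature feedback on `(x, x')` is the indicator of `x`. -/
noncomputable def OtDClass {X Y : Type} (F : Set (X → Y)) :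
    Set (Teacher (X ⊕ Y) Y (OtDPhi X Y)) :=
  {T | ∃ f ∈ F, T.label = Sum.elim f id ∧
    T.feedback = fun x _ => some (indF x)}

/-- The examples appearing in a history. -/
def HistX {X Y : Type} (H : Set (X × Y)) : Set X := {x | ∃ y : Y, (x, y) ∈ H}

/-- The mapping `DtO` from DFF to Online Learning: the class of restrictions
of the labeling functions of `𝒯` to the examples not appearing in `H`. -/
def DtO {X Y : Type} {Φ : Set (X → Bool)} (𝒯 : Set (Teacher X Y Φ))
    (H : Set (X × Y)) : Set ((((HistX H)ᶜ : Set X)) → Y) :=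
  {g | ∃ T ∈ 𝒯, g = fun x => T.label x.1}

/-- `LShat F n` holds iff there is a Littlestone tree of height `n` shattered
by the hypothesis class `F`: a complete binary tree with examples at internal
nodes, two distinct labels on the outgoing edges of each internal node, and
every root-to-leaf path realized by some hypothesis of `F`. -/
inductive LShat {X Y : Type} : Set (X → Y) → ℕ → Prop
  | leaf (F : Set (X → Y)) (h : F.Nonempty) : LShat F 0
  | node (F : Set (X → Y)) (n : ℕ) (x : X) (y₁ y₂ : Y) (hne : y₁ ≠ y₂)
      (h₁ : LShat {f ∈ F | f x = y₁} n) (h₂ : LShat {f ∈ F | f x = y₂} n) :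
      LShat F (n + 1)

/-- The (multiclass) Littlestone dimension of a hypothesis class: the maximal
height of a Littlestone tree for it (possibly infinite). -/
noncomputable def Ldim {X Y : Type} (F : Set (X → Y)) : ℕ∞ :=
  sSup {d : ℕ∞ | ∃ n : ℕ, d = n ∧ LShat F n}

/-- `F` admits an infinite-depth Littlestone tree: a binary branching
assignment of examples and pairs of distinct labels to finite binary
sequences such that every finite branch is consistent with some hypothesis
of `F`. -/
def InfLTree {X Y : Type} (F : Set (X → Y)) : Prop :=
  ∃ (x : List Bool → X) (y : List Bool → Bool → Y),
    (∀ s : List Bool, y s false ≠ y s true) ∧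
    ∀ b : List Bool, ∃ f ∈ F,
      ∀ (s : List Bool) (c : Bool), (s ++ [c]) <+: b → f (x s) = y s c

/-- The natural feature construction: examples are infinite Boolean sequences
and the features are the coordinate projections and their negations. -/
def PhiNat : Set ((ℕ → Bool) → Bool) :=
  {φ | ∃ n : ℕ, φ = fun x => x n} ∪ {φ | ∃ n : ℕ, φ = fun x => !(x n)}

/-- The feature feedback function of the teacher `T_n` of the separation
example: on a pair of examples on which the coordinate feature `f_n`
disagrees, return `f_n` or its negation accordingly, and `⊥` otherwise. -/
def psiCoord (n : ℕ) : (ℕ → Bool) → (ℕ → Bool) → Option ((ℕ → Bool) → Bool) :=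
  fun x x' =>
    if x n = true ∧ x' n = false then some (fun z => z n)
    else if x n = false ∧ x' n = true then some (fun z => !(z n))
    else none

/-- The teacher class of the separation example: for every `n`, the teacher
labeling by the coordinate feature `f_n` with feature feedback `ψ_n`. -/
def sepClass : Set (Teacher (ℕ → Bool) Bool PhiNat) :=
  {T | ∃ n : ℕ, T.label = (fun x => x n) ∧ T.feedback = psiCoord n}

/-- The history of the separation example: the all-zeros sequence labeled `0`
and the all-ones sequence labeled `1`. -/
def sepHist : Set ((ℕ → Bool) × Bool) :=
  {((fun _ => false : ℕ → Bool), false), ((fun _ => true : ℕ → Bool), true)}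

/-!
Against the history example `(0̄, 0)` any query `x` must be labeled `1`, and then the feedback
of `T_n` is `f_n`, which pins down `n`. A class of teachers sharing one labeling function cannot
shatter even one more level: the branches against `(0̄, 0)` and `(1̄, 1)` would need opposite
labels at the next query. One level is realized by the query `e₀` answered by `T₀` or `T₁`.

On the online side, let `x_k m` be the `k`-th bit of the list of booleans coded by `m`. These
sequences are not constant, and for every finite pattern `b` the coordinate at the code of `b`
follows `b` along `x_0, x_1, …`, so querying `x_k` at depth `k` gives an infinite Littlestone
tree.
-/

section DFF

variable {X Y : Type} {Φ : Set (X → Bool)}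

lemma ConsistentH.insert {T : Teacher X Y Φ} {H : Set (X × Y)} {p : X × Y}
    (hp : T.label p.1 = p.2) (hH : ConsistentH T H) : ConsistentH T (insert p H) := by
  rintro q (rfl | hq)
  exacts [hp, hH q hq]

lemma ShatteredDFFT.exists_consistent {𝒯 : Set (Teacher X Y Φ)} {H : Set (X × Y)} {d : ℕ}
    (hs : ShatteredDFFT Φ 𝒯 H d) (hH : H.Nonempty) : ∃ T ∈ 𝒯, ConsistentH T H := by
  induction hs with
  | leaf _ _ h => exact h
  | node _ _ _ _ _ _ _ _ _ ih =>
    obtain ⟨p, hp⟩ := hH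
    obtain ⟨T, ⟨hT, -⟩, hcons⟩ := ih p hp (Set.insert_nonempty _ _)
    exact ⟨T, hT, fun q hq => hcons q (Set.mem_insert_of_mem _ hq)⟩

lemma not_shatteredDFFT_succ_of_label_eq {𝒯 : Set (Teacher X Bool Φ)} {H : Set (X × Bool)}
    {a b : X} (ha : (a, false) ∈ H) (hb : (b, true) ∈ H)
    (hlabel : ∀ T ∈ 𝒯, ∀ T' ∈ 𝒯, T.label = T'.label) (d : ℕ) :
    ¬ ShatteredDFFT Φ 𝒯 H (d + 1) := by
  rintro (_ | ⟨_, _, _, x, y, φ, hne, -, h⟩)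
  obtain ⟨T, ⟨hT, hTx, -⟩, -⟩ := (h _ ha).exists_consistent (Set.insert_nonempty _ _)
  obtain ⟨T', ⟨hT', hT'x, -⟩, -⟩ := (h _ hb).exists_consistent (Set.insert_nonempty _ _)
  have hya : y (a, false) = true := by simpa using hne _ ha
  have hyb : y (b, true) = false := by simpa using hne _ hb
  have hx := congrFun (hlabel T hT T' hT') x
  rw [hTx, hT'x, hya, hyb] at hx
  exact Bool.noConfusion hx

end DFF

/-- The teacher `T_n`. -/
def coordTeacher (n : ℕ) : Teacher (ℕ → Bool) Bool PhiNat where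
  label z := z n
  feedback := psiCoord n
  feedback_spec x xh h := by
    cases hx : x n <;> cases hxh : xh n <;> simp_all [psiCoord]
    exacts [Or.inr ⟨n, rfl⟩, Or.inl ⟨n, rfl⟩]

lemma coordTeacher_mem_sepClass (n : ℕ) : coordTeacher n ∈ sepClass := ⟨n, rfl, rfl⟩

lemma coordTeacher_consistent_sepHist (n : ℕ) : ConsistentH (coordTeacher n) sepHist := by
  rintro _ (rfl | rfl) <;> rfl

lemma sepClass_shatteredDFFT_one : ShatteredDFFT PhiNat sepClass sepHist 1 := by
  refine .node _ _ 0 (fun i => decide (i = 0)) (fun p => !p.2)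
    (fun p => if p.2 then fun z => !(z 1) else fun z => z 0) ?_ ?_ ?_
  · simp
  · rintro _ (rfl | rfl)
    exacts [Or.inl ⟨0, rfl⟩, Or.inr ⟨1, rfl⟩]
  · rintro _ (rfl | rfl)
    · exact .leaf _ _ ⟨coordTeacher 0, ⟨coordTeacher_mem_sepClass 0, rfl, rfl⟩,
        .insert rfl (coordTeacher_consistent_sepHist 0)⟩
    · exact .leaf _ _ ⟨coordTeacher 1, ⟨coordTeacher_mem_sepClass 1, rfl, rfl⟩,
        .insert rfl (coordTeacher_consistent_sepHist 1)⟩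

lemma sepClass_not_shatteredDFFT {n : ℕ} (hn : 2 ≤ n) :
    ¬ ShatteredDFFT PhiNat sepClass sepHist n := by
  obtain ⟨d, rfl⟩ := Nat.exists_eq_add_of_le' hn
  rintro (_ | ⟨_, _, _, x, y, φ, hne, -, h⟩)
  let p₀ : (ℕ → Bool) × Bool := (fun _ => false, false)
  have h0 : p₀ ∈ sepHist := Or.inl rfl
  have hy : y p₀ = true := by simpa [p₀] using hne _ h0
  -- after answering `1` against `0̄`, the feedback of `T_n` is `f_n` itself
  have hlabel : ∀ T ∈ TRestrict sepClass x p₀.1 true (φ p₀), T.label = φ p₀ := by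
    rintro T ⟨⟨k, hl, hf⟩, hx, hφ⟩
    rw [hl] at hx ⊢
    rw [hf, psiCoord, if_pos ⟨hx, rfl⟩] at hφ
    exact Option.some_inj.1 hφ
  refine not_shatteredDFFT_succ_of_label_eq (Set.mem_insert_of_mem _ h0)
    (Set.mem_insert_of_mem _ (Or.inr rfl)) ?_ d (hy ▸ h _ h0)
  intro T hT T' hT'
  rw [hlabel T (hy ▸ hT), hlabel T' (hy ▸ hT')]

lemma List.concat_prefix_concat_iff {α : Type*} {t s : List α} {c d : α} :
    t ++ [c] <+: s ++ [d] ↔ t ++ [c] <+: s ∨ t = s ∧ c = d := by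
  rw [List.prefix_concat_iff, or_comm, ← List.concat_eq_append, ← List.concat_eq_append,
    List.concat_inj]

section Littlestone

variable {X Y : Type}

lemma InfLTree.lshat {F : Set (X → Y)} (hF : InfLTree F) (n : ℕ) : LShat F n := by
  obtain ⟨x, y, hy, hbranch⟩ := hF
  let follow (s : List Bool) : Set (X → Y) :=
    {f ∈ F | ∀ t c, t ++ [c] <+: s → f (x t) = y t c}
  have hfollow (s : List Bool) (c : Bool) :
      {f ∈ follow s | f (x s) = y s c} = follow (s ++ [c]) := by
    ext f
    simp only [follow, Set.mem_ofPred_eq, List.concat_prefix_concat_iff]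
    constructor
    · rintro ⟨⟨hf, hs⟩, hc⟩
      exact ⟨hf, fun t c' => Or.rec (hs t c') (by rintro ⟨rfl, rfl⟩; exact hc)⟩
    · rintro ⟨hf, hs⟩
      exact ⟨⟨hf, fun t c' h => hs t c' (.inl h)⟩, hs s c (.inr ⟨rfl, rfl⟩)⟩
  have hshat : ∀ n s, LShat (follow s) n := by
    intro n
    induction n with
    | zero => exact fun s => .leaf _ (hbranch s)
    | succ n ih =>
      intro s
      refine .node _ n (x s) _ _ (hy s) ?_ ?_
      · exact hfollow s false ▸ ih _
      · exact hfollow s true ▸ ih _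
  simpa [follow, List.prefix_nil] using hshat n []

lemma Ldim_eq_top_of_forall_lshat {F : Set (X → Y)} (h : ∀ n, LShat F n) : Ldim F = ⊤ :=
  eq_top_iff.2 <| ENat.forall_natCast_le_iff_le.1 fun n _ => le_sSup ⟨n, rfl, h n⟩

lemma InfLTree.of_forall_pattern {F : Set (X → Bool)} (x : ℕ → X)
    (h : ∀ b : List Bool, ∃ f ∈ F, ∀ k c, b[k]? = some c → f (x k) = c) : InfLTree F := by
  refine ⟨fun s => x s.length, fun _ c => c, fun _ => Bool.false_ne_true, fun b => ?_⟩
  obtain ⟨f, hf, hpattern⟩ := h b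
  refine ⟨f, hf, fun s c ⟨r, hr⟩ => hpattern _ _ ?_⟩
  simp [← hr]

end Littlestone

def bitSeq (k : ℕ) : ℕ → Bool :=
  fun m => ((Encodable.decode m : Option (List Bool)).getD []).getD k false

lemma bitSeq_encode (k : ℕ) (b : List Bool) : bitSeq k (Encodable.encode b) = b.getD k false := by
  simp [bitSeq]

lemma bitSeq_not_mem_histX (k : ℕ) : bitSeq k ∈ (HistX sepHist)ᶜ := by
  have h0 : bitSeq k (Encodable.encode ([] : List Bool)) = false := by
    rw [bitSeq_encode, List.getD_nil]
  have h1 : bitSeq k (Encodable.encode (List.replicate (k + 1) true)) = true := by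
    simp [bitSeq_encode]
  rintro ⟨_, hx⟩
  simp only [sepHist, Set.mem_insert_iff, Set.mem_singleton_iff, Prod.mk.injEq] at hx
  rcases hx with ⟨hx, -⟩ | ⟨hx, -⟩ <;> simp [hx] at h0 h1

lemma sepClass_infLTree : InfLTree (DtO sepClass sepHist) := by
  refine .of_forall_pattern (fun k => ⟨bitSeq k, bitSeq_not_mem_histX k⟩) fun b => ?_
  refine ⟨fun x => x.1 (Encodable.encode b), ⟨coordTeacher _, coordTeacher_mem_sepClass _, rfl⟩,
    fun k c hc => ?_⟩
  simp [bitSeq_encode, List.getD_eq_getElem?_getD, hc]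

/-- **Theorem (separation between DFF and Online Learning).** For the
natural feature construction with labels `{0,1}`, the teacher class
`𝒯 = {T_n : n ∈ ℕ}` and history `H = {(0̄,0), (1̄,1)}` satisfy
`DFFdim(𝒯, H) = 1` while `Ldim(DtO(𝒯, H)) = ∞`; moreover, there exists an
infinite-depth Littlestone tree for `DtO(𝒯, H)`. -/
theorem dff_online_separation :
    DFFdim PhiNat sepClass sepHist = 1 ∧
    Ldim (DtO sepClass sepHist) = ⊤ ∧
    InfLTree (DtO sepClass sepHist) := by
  refine ⟨le_antisymm (sSup_le ?_) (le_sSup ⟨1, rfl, sepClass_shatteredDFFT_one⟩),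
    Ldim_eq_top_of_forall_lshat sepClass_infLTree.lshat, sepClass_infLTree⟩
  rintro _ ⟨n, rfl, hn⟩
  exact_mod_cast not_lt.1 fun h => sepClass_not_shatteredDFFT h hn
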